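/- arXiv:1803.08349 — 2 statements merged into one kernel-verified Lean document; each statement's English description precedes it below -/
import Mathlib

section
/- Let q > 1 be a real number, 0 < δ < 1, and let p = (p_1, p_2, …) be a real sequence with |p_n| < δ^n/q^n for all n ≥ 1. Define G_q(p) = ∏_{n≥1} (1 + p_n)^{s_n(q)/n} and ch_0^{(q)}(p) = (G_q(p) − 1)/(q(q² − 1)) − p_1²/(2(q − 1)) − p_1/(q(q − 1)) − p_2/(2(q + 1)). Then ∂_1 ch_0^{(q)}(p) exists, and p_1 − ∂_1 ch_0^{(q)}(p) = q p_1/(q − 1) − ( G_q(p)/(1 + p_1) − 1 )/(q(q − 1)); that is, p_1 − ∂_1 ch_0^{(q)}(p) = c_1^{(q)}(p). -/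
/-- `s_1(q) = q + 1` and `s_n(q) = ∑_{d ∣ n} μ(n/d) q^d` for `n ≠ 1`.
(For `n = 0` the sum over divisors is empty, so `sFun q 0 = 0`.) -/
noncomputable def sFun (q : ℝ) (n : ℕ) : ℝ :=
  if n = 1 then q + 1
  else ∑ d ∈ n.divisors, (ArithmeticFunction.moebius (n / d) : ℝ) * q ^ d

/-- `M_n(q) = (1/n) ∑_{d ∣ n} μ(n/d) q^d`; so `M_1(q) = q` and `M_n(q) = s_n(q)/n` for `n ≥ 2`. -/
noncomputable def MFun (q : ℝ) (n : ℕ) : ℝ :=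
  (1 / (n : ℝ)) * ∑ d ∈ n.divisors, (ArithmeticFunction.moebius (n / d) : ℝ) * q ^ d

/-- `H_q(p) = ∏_{n ≥ 1} (1 + p_n)^{M_n(q)}`, a product of real powers (`Real.rpow`).
The `n = 0` factor is `(1 + p 0) ^ (0 : ℝ) = 1`, so the product effectively runs over `n ≥ 1`. -/
noncomputable def Hfun (q : ℝ) (p : ℕ → ℝ) : ℝ :=
  ∏' n : ℕ, (1 + p n) ^ (MFun q n)

/-- `c_1^{(q)}(p) = q·p_1/(q − 1) − (H_q(p) − 1)/(q(q − 1))`. -/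
noncomputable def c1Fun (q : ℝ) (p : ℕ → ℝ) : ℝ :=
  q * p 1 / (q - 1) - (Hfun q p - 1) / (q * (q - 1))

/-- `G_q(p) = ∏_{n ≥ 1} (1 + p_n)^{s_n(q)/n}` (the `n = 0` factor is `1`). -/
noncomputable def Gfun (q : ℝ) (p : ℕ → ℝ) : ℝ :=
  ∏' n : ℕ, (1 + p n) ^ (sFun q n / (n : ℝ))

/-- `ch_0^{(q)}(p) = (G_q(p) − 1)/(q(q² − 1)) − p_1²/(2(q − 1)) − p_1/(q(q − 1)) − p_2/(2(q + 1))`. -/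
noncomputable def ch0Fun (q : ℝ) (p : ℕ → ℝ) : ℝ :=
  (Gfun q p - 1) / (q * (q ^ 2 - 1)) - (p 1) ^ 2 / (2 * (q - 1))
    - p 1 / (q * (q - 1)) - p 2 / (2 * (q + 1))

/-!
Only the factor `n = 1` of the products `G_q(p)` and `H_q(p)` depends on `p₁`, and since
`M_n(q) = s_n(q)/n` for `n ≠ 1`, the remaining factors agree: with `R` their common product,
`G_q(p) = (1 + p₁)^(q+1) R` and `H_q(p) = (1 + p₁)^q R`. Hence `∂₁ G_q = (q + 1) H_q`, and the
claim is algebra. The products converge because the exponents are `O(qⁿ)` while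
`log (1 + pₙ) = O((δ/q)ⁿ)`, so each is the exponential of an absolutely convergent series.
-/

open Real Function ArithmeticFunction
open scoped ArithmeticFunction.Moebius

lemma abs_sum_divisors_moebius_mul_pow_le {q : ℝ} (hq : 1 ≤ q) (n : ℕ) :
    |∑ d ∈ n.divisors, (μ (n / d) : ℝ) * q ^ d| ≤ n * q ^ n :=
  calc |∑ d ∈ n.divisors, (μ (n / d) : ℝ) * q ^ d|
      ≤ ∑ d ∈ n.divisors, |(μ (n / d) : ℝ) * q ^ d| := Finset.abs_sum_le_sum_abs _ _
    _ ≤ ∑ _d ∈ n.divisors, q ^ n := by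
        refine Finset.sum_le_sum fun d hd => ?_
        rw [abs_mul, abs_of_nonneg (by positivity : (0 : ℝ) ≤ q ^ d)]
        have hμ : |(μ (n / d) : ℝ)| ≤ 1 := by exact_mod_cast abs_moebius_le_one
        calc |(μ (n / d) : ℝ)| * q ^ d ≤ 1 * q ^ n :=
              mul_le_mul hμ (pow_le_pow_right₀ hq (Nat.divisor_le hd)) (by positivity) zero_le_one
          _ = q ^ n := one_mul _
    _ = n.divisors.card * q ^ n := by rw [Finset.sum_const, nsmul_eq_mul]
    _ ≤ n * q ^ n := by gcongr; exact_mod_cast Nat.card_divisors_le_self n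

lemma MFun_zero (q : ℝ) : MFun q 0 = 0 := by simp [MFun]

lemma MFun_one (q : ℝ) : MFun q 1 = q := by simp [MFun]

lemma MFun_eq_sFun_div {n : ℕ} (hn : n ≠ 1) (q : ℝ) : MFun q n = sFun q n / n := by
  rw [MFun, sFun, if_neg hn, one_div, inv_mul_eq_div]

lemma sFun_one (q : ℝ) : sFun q 1 = q + 1 := by simp [sFun]

lemma abs_MFun_le {q : ℝ} (hq : 1 ≤ q) (n : ℕ) : |MFun q n| ≤ q ^ n := by
  rcases Nat.eq_zero_or_pos n with rfl | hn
  · simp [MFun_zero]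
  rw [MFun, abs_mul, abs_of_nonneg (by positivity), one_div, inv_mul_le_iff₀ (by positivity)]
  exact abs_sum_divisors_moebius_mul_pow_le hq n

lemma abs_sFun_div_le {q : ℝ} (hq : 1 ≤ q) (n : ℕ) : |sFun q n / n| ≤ 2 * q ^ n := by
  rcases eq_or_ne n 1 with rfl | hn
  · rw [sFun_one, Nat.cast_one, div_one, pow_one, abs_of_pos (by linarith)]
    linarith
  rw [← MFun_eq_sFun_div hn]
  linarith [abs_MFun_le hq n, pow_nonneg (zero_le_one.trans hq) n]

lemma abs_log_one_add_le {x : ℝ} (hx : |x| < 1) : |log (1 + x)| ≤ |x| / (1 - |x|) := by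
  simpa [sub_eq_add_neg] using abs_log_sub_add_sum_range_le (x := -x) (by rwa [abs_neg]) 0

lemma summable_mul_log_one_add {e p : ℕ → ℝ} {a b C : ℝ} (ha : 0 ≤ a) (hb0 : 0 ≤ b)
    (hb1 : b < 1) (hab : a * b < 1) (he : ∀ n, |e n| ≤ C * a ^ n) (he0 : e 0 = 0)
    (hp : ∀ n, 1 ≤ n → |p n| ≤ b ^ n) :
    Summable fun n => e n * log (1 + p n) := by
  have hC : 0 ≤ C := by simpa using (abs_nonneg _).trans (he 0)
  have hbound : ∀ n, |e n * log (1 + p n)| ≤ C / (1 - b) * (a * b) ^ n := by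
    intro n
    rcases Nat.eq_zero_or_pos n with rfl | hn
    · simp only [he0, zero_mul, abs_zero]
      have : 0 < 1 - b := by linarith
      positivity
    have hpb : |p n| ≤ b := (hp n hn).trans (pow_le_of_le_one hb0 hb1.le hn.ne')
    have hlog : |log (1 + p n)| ≤ b ^ n / (1 - b) :=
      calc |log (1 + p n)| ≤ |p n| / (1 - |p n|) := abs_log_one_add_le (by linarith)
        _ ≤ b ^ n / (1 - b) := by gcongr; linarith [hp n hn]
    calc |e n * log (1 + p n)| = |e n| * |log (1 + p n)| := abs_mul _ _
      _ ≤ C * a ^ n * (b ^ n / (1 - b)) :=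
          mul_le_mul (he n) hlog (abs_nonneg _) (by positivity)
      _ = C / (1 - b) * (a * b) ^ n := by ring
  exact Summable.of_abs <| Summable.of_nonneg_of_le (fun n => abs_nonneg _) hbound <|
    (summable_geometric_of_lt_one (mul_nonneg ha hb0) hab).mul_left _

lemma multipliable_one_add_rpow {e p : ℕ → ℝ} {a b C : ℝ} (ha : 0 ≤ a) (hb0 : 0 ≤ b)
    (hb1 : b < 1) (hab : a * b < 1) (he : ∀ n, |e n| ≤ C * a ^ n) (he0 : e 0 = 0)
    (hp : ∀ n, 1 ≤ n → |p n| ≤ b ^ n) :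
    Multipliable fun n => (1 + p n) ^ e n := by
  have hexp : (fun n => (1 + p n) ^ e n) = rexp ∘ fun n => e n * log (1 + p n) := by
    funext n
    rcases Nat.eq_zero_or_pos n with rfl | hn
    · simp [he0]
    have hpn : |p n| < 1 := (hp n hn).trans_lt (pow_lt_one₀ hb0 hb1 hn.ne')
    rw [comp_apply, rpow_def_of_pos (by linarith [neg_abs_le (p n)]), mul_comm]
  rw [hexp]
  exact (summable_mul_log_one_add ha hb0 hb1 hab he he0 hp).hasSum.rexp.multipliable

lemma tprod_one_add_update_rpow (p e : ℕ → ℝ) (k : ℕ) (t : ℝ)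
    (h : Multipliable fun n => (1 + update p k 0 n) ^ e n) :
    ∏' n, (1 + update p k t n) ^ e n = (1 + t) ^ e k * ∏' n, (1 + update p k 0 n) ^ e n := by
  set g : ℕ → ℝ := fun n => (1 + update p k 0 n) ^ e n
  have hg : (fun n => (1 + update p k t n) ^ e n) = update g k ((1 + t) ^ e k) := by
    funext n
    rcases eq_or_ne n k with rfl | hn <;> simp [g, *]
  have hgk : update g k 1 = g := by
    funext n
    rcases eq_or_ne n k with rfl | hn <;> simp [g, *]
  rw [hg, Multipliable.tprod_eq_mul_tprod_ite' k (by rwa [update_idem, hgk]), update_self]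
  congr 1
  refine tprod_congr fun n => ?_
  rcases eq_or_ne n k with rfl | hn <;> simp [g, *]

lemma Gfun_update_one_eq_rpow_mul (q : ℝ) (p : ℕ → ℝ) (t : ℝ)
    (h : Multipliable fun n => (1 + update p 1 0 n) ^ (sFun q n / n)) :
    Gfun q (update p 1 t) = (1 + t) ^ (q + 1) * Gfun q (update p 1 0) := by
  simpa [Gfun, sFun_one] using tprod_one_add_update_rpow p _ 1 t h

lemma Hfun_eq_rpow_mul_Gfun_update_one (q : ℝ) (p : ℕ → ℝ)
    (h : Multipliable fun n => (1 + update p 1 0 n) ^ MFun q n) :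
    Hfun q p = (1 + p 1) ^ q * Gfun q (update p 1 0) := by
  have hH := tprod_one_add_update_rpow p (MFun q) 1 (p 1) h
  rw [update_eq_self, MFun_one] at hH
  rw [Hfun, hH, Gfun]
  congr 1
  refine tprod_congr fun n => ?_
  rcases eq_or_ne n 1 with rfl | hn
  · simp
  · rw [MFun_eq_sFun_div hn]

lemma hasDerivAt_ch0Fun_update_one {q : ℝ} (hq : 0 ≤ q) (p : ℕ → ℝ)
    (h : Multipliable fun n => (1 + update p 1 0 n) ^ (sFun q n / n)) :
    HasDerivAt (fun t => ch0Fun q (update p 1 t))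
      ((q + 1) * (1 + p 1) ^ q * Gfun q (update p 1 0) / (q * (q ^ 2 - 1))
        - p 1 / (q - 1) - 1 / (q * (q - 1))) (p 1) := by
  have hch0 : (fun t => ch0Fun q (update p 1 t)) = fun t =>
      ((1 + t) ^ (q + 1) * Gfun q (update p 1 0) - 1) / (q * (q ^ 2 - 1))
        - t ^ 2 / (2 * (q - 1)) - t / (q * (q - 1)) - p 2 / (2 * (q + 1)) := by
    funext t
    simp only [ch0Fun, Gfun_update_one_eq_rpow_mul q p t h, update_self,
      update_of_ne (by norm_num : (2 : ℕ) ≠ 1)]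
  have hpow : HasDerivAt (fun t : ℝ => (1 + t) ^ (q + 1)) ((q + 1) * (1 + p 1) ^ q) (p 1) := by
    simpa using ((hasDerivAt_id (p 1)).const_add 1).rpow_const (p := q + 1) (Or.inr (by linarith))
  rw [hch0]
  refine ((((hpow.mul_const _).sub_const 1).div_const _).sub
    ((hasDerivAt_pow 2 (p 1)).div_const _) |>.sub ((hasDerivAt_id (p 1)).div_const _)).sub_const _
    |>.congr_deriv ?_
  field_simp
  ring

/-- For `q > 1`, `0 < δ < 1` and `|p_n| < δ^n/q^n` for all `n ≥ 1`, the partial derivative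
`∂_1 ch_0^{(q)}(p)` (the derivative at `t = p_1` of `t ↦ ch_0^{(q)}` of `p` with first entry
replaced by `t`) exists, and
`p_1 − ∂_1 ch_0^{(q)}(p) = q·p_1/(q − 1) − (G_q(p)/(1 + p_1) − 1)/(q(q − 1)) = c_1^{(q)}(p)`. -/
theorem p1_sub_deriv_ch0_eq_c1 (q δ : ℝ) (hq : 1 < q) (hδ0 : 0 < δ) (hδ1 : δ < 1)
    (p : ℕ → ℝ) (hp : ∀ n : ℕ, 1 ≤ n → |p n| < δ ^ n / q ^ n) :
    ∃ D : ℝ,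
      HasDerivAt (fun t : ℝ => ch0Fun q (Function.update p 1 t)) D (p 1) ∧
      p 1 - D = q * p 1 / (q - 1) - (Gfun q p / (1 + p 1) - 1) / (q * (q - 1)) ∧
      p 1 - D = c1Fun q p := by
  have hq0 : 0 < q := by linarith
  have hr0 : 0 ≤ δ / q := by positivity
  have hr1 : δ / q < 1 := (div_lt_one hq0).2 (by linarith)
  have hδq : q * (δ / q) < 1 := by rwa [mul_div_cancel₀ _ hq0.ne']
  have hp₀ : ∀ n, 1 ≤ n → |update p 1 0 n| ≤ (δ / q) ^ n := by
    intro n hn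
    rcases eq_or_ne n 1 with rfl | hn1
    · simp only [update_self, abs_zero]; positivity
    · rw [update_of_ne hn1, div_pow]; exact (hp n hn).le
  have hGm := multipliable_one_add_rpow hq0.le hr0 hr1 hδq (abs_sFun_div_le hq.le) (by simp) hp₀
  have hHm := multipliable_one_add_rpow (C := 1) hq0.le hr0 hr1 hδq
    (by simpa using abs_MFun_le hq.le) (MFun_zero q) hp₀
  have hp1 : 0 < 1 + p 1 := by
    have := hp 1 le_rfl
    rw [pow_one, pow_one] at this
    linarith [neg_abs_le (p 1)]
  have hG : Gfun q p = (1 + p 1) ^ q * Gfun q (update p 1 0) * (1 + p 1) := by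
    rw [mul_right_comm, ← rpow_add_one hp1.ne', ← Gfun_update_one_eq_rpow_mul q p (p 1) hGm,
      update_eq_self]
  have hq1 : q - 1 ≠ 0 := by linarith
  have hq2 : q ^ 2 - 1 ≠ 0 := by nlinarith
  refine ⟨_, hasDerivAt_ch0Fun_update_one hq0.le p hGm, ?_, ?_⟩
  · rw [hG, mul_div_cancel_right₀ _ hp1.ne']
    field_simp
    ring
  · rw [c1Fun, Hfun_eq_rpow_mul_Gfun_update_one q p hHm]
    field_simp
    ring
end

section
/- Let q > 1 be a real number and let u be a real number with 0 ≤ u and qu < 1. Then the family n ↦ (1 + u^n)^{s_n(q)/n} (n ≥ 1) is multipliable and ∏_{n=1}^∞ (1 + u^n)^{s_n(q)/n} = (1 + u)(1 − q u²)/(1 − q u). -/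
open Real

/-- For `q ∈ ℕ` this counts the aperiodic words of length `n` over `q` letters. -/
noncomputable def aperiodicCount (q : ℝ) (n : ℕ) : ℝ :=
  ∑ d ∈ n.divisors, (ArithmeticFunction.moebius (n / d) : ℝ) * q ^ d

theorem sum_divisors_aperiodicCount (q : ℝ) :
    ∀ n > 0, ∑ d ∈ n.divisors, aperiodicCount q d = q ^ n := by
  rw [ArithmeticFunction.sum_eq_iff_sum_smul_moebius_eq]
  intro n _
  rw [Nat.sum_divisorsAntidiagonal' fun x y => (ArithmeticFunction.moebius x : ℤ) • q ^ y]
  simp [aperiodicCount, zsmul_eq_mul]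

theorem abs_aperiodicCount_le {q : ℝ} (hq : 1 ≤ q) (n : ℕ) :
    |aperiodicCount q n| ≤ n * q ^ n :=
  calc |aperiodicCount q n|
      ≤ ∑ d ∈ n.divisors, |(ArithmeticFunction.moebius (n / d) : ℝ) * q ^ d| :=
        Finset.abs_sum_le_sum_abs _ _
    _ ≤ ∑ _d ∈ n.divisors, q ^ n := by
        refine Finset.sum_le_sum fun d hd => ?_
        have hμ : |(ArithmeticFunction.moebius (n / d) : ℝ)| ≤ 1 := by
          exact_mod_cast ArithmeticFunction.abs_moebius_le_one
        rw [abs_mul, abs_of_nonneg (by positivity : (0 : ℝ) ≤ q ^ d)]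
        calc _ ≤ 1 * q ^ d := by gcongr
          _ ≤ q ^ n := by rw [one_mul]; exact pow_le_pow_right₀ hq (Nat.divisor_le hd)
    _ ≤ n * q ^ n := by
        rw [Finset.sum_const, nsmul_eq_mul]
        gcongr
        exact_mod_cast Nat.card_divisors_le_self n

theorem sFun_eq_aperiodicCount_add (q : ℝ) (n : ℕ) :
    sFun q n = aperiodicCount q n + if n = 1 then 1 else 0 := by
  by_cases hn : n = 1
  · subst hn; simp [sFun, aperiodicCount]
  · simp [sFun, aperiodicCount, hn]

theorem Real.hasSum_pow_div_log_of_abs_lt_one' {r : ℝ} (hr : |r| < 1) :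
    HasSum (fun m : ℕ => r ^ m / m) (-log (1 - r)) := by
  have h := HasSum.zero_add (f := fun m : ℕ => r ^ m / m) (by
    simpa only [Nat.cast_add_one] using hasSum_pow_div_log_of_abs_lt_one hr)
  rwa [Nat.cast_zero, div_zero, zero_add] at h

theorem Real.log_one_add_eq_log_one_sub_sq_sub {y : ℝ} (hy : |y| < 1) :
    log (1 + y) = log (1 - y ^ 2) - log (1 - y) := by
  have h₁ : 0 < 1 - y := by linarith [le_abs_self y]
  have h₂ : 0 < 1 + y := by linarith [neg_abs_le y]
  rw [show 1 - y ^ 2 = (1 + y) * (1 - y) by ring, log_mul h₂.ne' h₁.ne']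
  ring

/-- The `(n, k)` term of `∑_n a_n/n · (-log (1 - x^n))` expanded as a double series. It vanishes
when `n = 0` (as `a_0 = 0`) or `k = 0` (as `x^0 / 0 = 0`), so the fibre over `m = 0` of
`(n, k) ↦ n k` contributes nothing. -/
noncomputable def cyclotomicTerm (q x : ℝ) (p : ℕ × ℕ) : ℝ :=
  aperiodicCount q p.1 * (x ^ (p.1 * p.2) / (p.1 * p.2 : ℕ))

theorem summable_cyclotomicTerm {q x : ℝ} (hq : 1 ≤ q) (hx : q * |x| < 1) :
    Summable (cyclotomicTerm q x) := by
  have hx1 : |x| < 1 := by nlinarith [abs_nonneg x]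
  have hqx : 0 ≤ q * |x| := mul_nonneg (by linarith) (abs_nonneg x)
  have hmaj : Summable fun p : ℕ × ℕ => (q * |x|) ^ p.1 * |x| ^ (p.2 - 1) := by
    have hshift : Summable fun k : ℕ => |x| ^ (k - 1) :=
      (summable_nat_add_iff (f := fun k : ℕ => |x| ^ (k - 1)) 1).mp <| by
        simpa only [Nat.add_sub_cancel] using summable_geometric_of_lt_one (abs_nonneg x) hx1
    exact Summable.mul_of_nonneg (f := fun n => (q * |x|) ^ n) (g := fun k => |x| ^ (k - 1))
      (summable_geometric_of_lt_one hqx hx) hshift (fun n => pow_nonneg hqx n)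
      (fun k => pow_nonneg (abs_nonneg x) (k - 1))
  refine Summable.of_norm_bounded hmaj fun ⟨n, k⟩ => ?_
  rcases Nat.eq_zero_or_pos n with rfl | hn
  · simp [cyclotomicTerm, aperiodicCount]
  rcases Nat.eq_zero_or_pos k with rfl | hk
  · simpa [cyclotomicTerm] using pow_nonneg hqx n
  have hexp : n + (k - 1) ≤ n * k := by
    obtain ⟨j, rfl⟩ := Nat.exists_eq_add_of_lt hk
    simp only [zero_add, Nat.add_sub_cancel]
    nlinarith
  have hk1 : (1 : ℝ) ≤ k := by exact_mod_cast hk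
  calc ‖cyclotomicTerm q x (n, k)‖
      = |aperiodicCount q n| * |x| ^ (n * k) / (n * k) := by
        rw [cyclotomicTerm, Real.norm_eq_abs, abs_mul, abs_div, abs_pow, Nat.abs_cast]
        push_cast
        ring
    _ ≤ n * q ^ n * |x| ^ (n * k) / (n * 1) := by
        gcongr
        exact abs_aperiodicCount_le hq n
    _ = q ^ n * |x| ^ (n * k) := by field_simp
    _ ≤ q ^ n * |x| ^ (n + (k - 1)) :=
        mul_le_mul_of_nonneg_left (pow_le_pow_of_le_one (abs_nonneg x) hx1.le hexp)
          (pow_nonneg (by linarith) n)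
    _ = (q * |x|) ^ n * |x| ^ (k - 1) := by ring

theorem tsum_fiber_cyclotomicTerm (q x : ℝ) (m : ℕ) :
    ∑' p : (fun p : ℕ × ℕ => p.1 * p.2) ⁻¹' {m}, cyclotomicTerm q x p
      = (q * x) ^ m / m := by
  rcases eq_or_ne m 0 with rfl | hm
  · have hzero (p : (fun p : ℕ × ℕ => p.1 * p.2) ⁻¹' {0}) : cyclotomicTerm q x p = 0 := by
      obtain ⟨p, hp⟩ := p
      simp only [Set.mem_preimage, Set.mem_singleton_iff] at hp
      simp [cyclotomicTerm, hp]
    rw [tsum_congr hzero, tsum_zero, Nat.cast_zero, div_zero]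
  rw [show (fun p : ℕ × ℕ => p.1 * p.2) ⁻¹' {m} = m.divisorsAntidiagonal by ext; simp [hm],
    Finset.tsum_subtype' m.divisorsAntidiagonal (cyclotomicTerm q x)]
  calc ∑ p ∈ m.divisorsAntidiagonal, cyclotomicTerm q x p
      = ∑ p ∈ m.divisorsAntidiagonal, aperiodicCount q p.1 * (x ^ m / m) :=
        Finset.sum_congr rfl fun p hp => by
          rw [cyclotomicTerm, (Nat.mem_divisorsAntidiagonal.mp hp).1]
    _ = (∑ d ∈ m.divisors, aperiodicCount q d) * (x ^ m / m) := by
        rw [← Finset.sum_mul, Nat.sum_divisorsAntidiagonal fun d _ => aperiodicCount q d]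
    _ = (q * x) ^ m / m := by
        rw [sum_divisors_aperiodicCount q m (Nat.pos_of_ne_zero hm), mul_pow, mul_div_assoc]

theorem hasSum_aperiodicCount_div_mul_log_one_sub {q x : ℝ} (hq : 1 ≤ q) (hx : q * |x| < 1) :
    HasSum (fun n : ℕ => aperiodicCount q n / n * log (1 - x ^ n)) (log (1 - q * x)) := by
  have hF := summable_cyclotomicTerm hq hx
  have hx1 : |x| < 1 := by nlinarith [abs_nonneg x]
  have hdiag : HasSum (cyclotomicTerm q x) (-log (1 - q * x)) := by
    have h := hF.hasSum.tsum_fiberwise fun p => p.1 * p.2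
    simp only [tsum_fiber_cyclotomicTerm] at h
    have hqx : |q * x| < 1 := by rwa [abs_mul, abs_of_nonneg (by linarith)]
    rw [(Real.hasSum_pow_div_log_of_abs_lt_one' hqx).unique h]
    exact hF.hasSum
  have hrow (n : ℕ) : HasSum (fun k => cyclotomicTerm q x (n, k))
      (aperiodicCount q n / n * -log (1 - x ^ n)) := by
    rcases eq_or_ne n 0 with rfl | hn
    · simp [cyclotomicTerm, aperiodicCount]
    have hxn : |x ^ n| < 1 := by rw [abs_pow]; exact pow_lt_one₀ (abs_nonneg x) hx1 hn
    have hterm : (fun k => cyclotomicTerm q x (n, k))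
        = fun k : ℕ => aperiodicCount q n / n * ((x ^ n) ^ k / k) := by
      funext k
      simp only [cyclotomicTerm, pow_mul, Nat.cast_mul]
      field_simp
    rw [hterm]
    exact (Real.hasSum_pow_div_log_of_abs_lt_one' hxn).mul_left _
  simpa using (hdiag.prod_fiberwise hrow).neg

theorem hasSum_aperiodicCount_div_mul_log_one_add {q u : ℝ} (hq : 1 ≤ q) (hu : q * |u| < 1) :
    HasSum (fun n : ℕ => aperiodicCount q n / n * log (1 + u ^ n))
      (log (1 - q * u ^ 2) - log (1 - q * u)) := by
  have hu1 : |u| < 1 := by nlinarith [abs_nonneg u]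
  have hu2 : q * |u ^ 2| < 1 := by
    rw [abs_pow, sq]; nlinarith [abs_nonneg u, mul_nonneg (by linarith : 0 ≤ q) (abs_nonneg u)]
  have hterm : (fun n : ℕ => aperiodicCount q n / n * log (1 + u ^ n)) = fun n : ℕ =>
      aperiodicCount q n / n * log (1 - (u ^ 2) ^ n)
        - aperiodicCount q n / n * log (1 - u ^ n) := by
    funext n
    rcases eq_or_ne n 0 with rfl | hn
    · simp [aperiodicCount]
    have hun : |u ^ n| < 1 := by rw [abs_pow]; exact pow_lt_one₀ (abs_nonneg u) hu1 hn
    rw [Real.log_one_add_eq_log_one_sub_sq_sub hun, ← pow_mul, ← pow_mul, mul_comm n 2, mul_sub]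
  rw [hterm]
  exact (hasSum_aperiodicCount_div_mul_log_one_sub hq hu2).sub
    (hasSum_aperiodicCount_div_mul_log_one_sub hq hu)

theorem hasSum_sFun_div_mul_log_one_add {q u : ℝ} (hq : 1 ≤ q) (hu : q * |u| < 1) :
    HasSum (fun n : ℕ => sFun q n / n * log (1 + u ^ n))
      (log (1 - q * u ^ 2) - log (1 - q * u) + log (1 + u)) := by
  have hterm : (fun n : ℕ => sFun q n / n * log (1 + u ^ n)) = fun n : ℕ =>
      aperiodicCount q n / n * log (1 + u ^ n) + if n = 1 then log (1 + u) else 0 := by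
    funext n
    rw [sFun_eq_aperiodicCount_add]
    split_ifs with h1
    · subst h1
      simp only [Nat.cast_one, div_one, pow_one]
      ring
    · simp
  rw [hterm]
  exact (hasSum_aperiodicCount_div_mul_log_one_add hq hu).add (hasSum_ite_eq 1 (log (1 + u)))

/-- For `q > 1` and `0 ≤ u` with `q·u < 1`, the family `n ↦ (1 + u^n)^{s_n(q)/n}` (for `n ≥ 1`;
the `n = 0` factor has exponent `0/0 = 0` and hence equals `1`) is multipliable and
`∏_{n ≥ 1} (1 + u^n)^{s_n(q)/n} = (1 + u)(1 − q u²)/(1 − q u)`.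
Here `x ^ a` is the real power `Real.rpow`. -/
theorem multipliable_and_tprod_eval (q u : ℝ) (hq : 1 < q) (hu0 : 0 ≤ u) (hu1 : q * u < 1) :
    Multipliable (fun n : ℕ => (1 + u ^ n) ^ (sFun q n / (n : ℝ))) ∧
    ∏' n : ℕ, (1 + u ^ n) ^ (sFun q n / (n : ℝ))
      = (1 + u) * (1 - q * u ^ 2) / (1 - q * u) := by
  have hprod := (hasSum_sFun_div_mul_log_one_add hq.le (by rwa [abs_of_nonneg hu0])).rexp
  have hfactor : rexp ∘ (fun n : ℕ => sFun q n / n * log (1 + u ^ n))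
      = fun n : ℕ => (1 + u ^ n) ^ (sFun q n / (n : ℝ)) := by
    funext n
    rw [Function.comp_apply, rpow_def_of_pos (by positivity), mul_comm]
  rw [hfactor, exp_add, exp_sub, exp_log (by nlinarith), exp_log (by linarith),
    exp_log (by linarith)] at hprod
  exact ⟨hprod.multipliable, hprod.tprod_eq.trans (by ring)⟩
end
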